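/- Let X be a nonempty compact topological space with a Borel probability measure μ, let f_* = (f_i)_{i≥1} be a sequence of μ-preserving homeomorphisms of X, and let F be an α-quasi-integral of f_* for some α ∈ (0,1]. Then for every c ∈ (0, α), the set A_c = {x ∈ X : F(x) ≥ c·max_X F} satisfies R(f_*, A_c) ≥ (α − c)/(1 − c). -/

import Mathlib

open MeasureTheory Filter
open scoped Classical

/-- The evolution of a sequential system: `f^{(0)} = id`, `f^{(i)} = f_i ∘ ⋯ ∘ f_1`. -/
def seqEvol {X : Type*} [TopologicalSpace X] (f : ℕ → X ≃ₜ X) : ℕ → X → X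
  | 0 => id
  | i + 1 => (f (i + 1)) ∘ seqEvol f i

/-- `ν_{N,A}(x)`: the number of indices `0 ≤ i ≤ N−1` with `f^{(i)}(x) ∈ A`. -/
noncomputable def nuCount {X : Type*} [TopologicalSpace X] (f : ℕ → X ≃ₜ X)
    (A : Set X) (N : ℕ) (x : X) : ℕ :=
  ((Finset.range N).filter fun i => seqEvol f i x ∈ A).card

/-- `R(f_*, A) = limsup_{N→∞} sup_x ν_{N,A}(x)/N`. -/
noncomputable def Rrec {X : Type*} [TopologicalSpace X] (f : ℕ → X ≃ₜ X)
    (A : Set X) : ℝ :=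
  limsup (fun N : ℕ => ⨆ x : X, (nuCount f A N x : ℝ) / N) atTop

/-! Each visit to `A_c` contributes at most `max F` to the Birkhoff sum and every other step less
than `c · max F`, so the average is at most `c M + (1 - c) M · ν_{N,A_c}(x) / N` with
`M = max F`; passing to `sup_x` and `limsup_N` gives `α M ≤ c M + (1 - c) M · R(f_*, A_c)`,
which is the claim when `M > 0`. As `F` has mean zero, `M ≥ 0`. If `M = 0`, then `F ≤ 0` with
mean zero forces `F = 0` almost everywhere, so `A_c` is conull; the `f^{(i)}` preserve `μ`,
hence some orbit never leaves `A_c` and `R(f_*, A_c) = 1`. -/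

lemma Finset.sum_le_card_mul_add_card_filter_mul {ι : Type*} (s : Finset ι) (p : ι → Prop)
    (g : ι → ℝ) {a b : ℝ} (hp : ∀ i ∈ s, p i → g i ≤ b) (hnp : ∀ i ∈ s, ¬ p i → g i ≤ a) :
    ∑ i ∈ s, g i ≤ s.card * a + (b - a) * (s.filter p).card := by
  have hg : ∀ i ∈ s, g i ≤ a + (b - a) * (if p i then 1 else 0) := by
    intro i hi
    by_cases h : p i
    · simpa [h] using hp i hi h
    · simpa [h] using hnp i hi h
  calc ∑ i ∈ s, g i ≤ ∑ i ∈ s, (a + (b - a) * (if p i then 1 else 0)) := Finset.sum_le_sum hg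
    _ = s.card * a + (b - a) * (s.filter p).card := by
      rw [Finset.sum_add_distrib, ← Finset.mul_sum, Finset.sum_boole, Finset.sum_const,
        nsmul_eq_mul]

lemma abs_one_div_mul_sum_range_le {g : ℕ → ℝ} {K : ℝ} (hK : 0 ≤ K) (hg : ∀ i, |g i| ≤ K)
    (N : ℕ) : |(1 / (N : ℝ)) * ∑ i ∈ Finset.range N, g i| ≤ K := by
  rcases N.eq_zero_or_pos with rfl | hN
  · simpa using hK
  have hsum : |∑ i ∈ Finset.range N, g i| ≤ N * K :=
    calc |∑ i ∈ Finset.range N, g i| ≤ ∑ i ∈ Finset.range N, |g i| :=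
          Finset.abs_sum_le_sum_abs _ _
      _ ≤ ∑ _i ∈ Finset.range N, K := Finset.sum_le_sum fun i _ => hg i
      _ = N * K := by simp
  rwa [abs_mul, abs_of_pos (by positivity), one_div, inv_mul_le_iff₀ (by positivity)]

lemma Real.iSup_mem_Icc {ι : Type*} [Nonempty ι] {g : ι → ℝ} {a b : ℝ}
    (hg : ∀ i, g i ∈ Set.Icc a b) : (⨆ i, g i) ∈ Set.Icc a b :=
  ⟨le_ciSup_of_le ⟨b, by rintro _ ⟨i, rfl⟩; exact (hg i).2⟩ (Classical.arbitrary ι) (hg _).1,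
    ciSup_le fun i => (hg i).2⟩

section SequentialSystem

variable {X : Type*} [TopologicalSpace X] (f : ℕ → X ≃ₜ X)

lemma seqEvol_measurePreserving [MeasurableSpace X] (μ : Measure X)
    (hf : ∀ i, MeasurePreserving (f i) μ μ) (i : ℕ) :
    MeasurePreserving (seqEvol f i) μ μ := by
  induction i with
  | zero => exact MeasurePreserving.id μ
  | succ n ih => exact (hf (n + 1)).comp ih

lemma exists_forall_seqEvol_mem [MeasurableSpace X] (μ : Measure X) [NeZero μ]
    (hf : ∀ i, MeasurePreserving (f i) μ μ) {A : Set X} (hA : μ Aᶜ = 0) :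
    ∃ x, ∀ i, seqEvol f i x ∈ A :=
  (ae_all_iff.2 fun i => (seqEvol_measurePreserving f μ hf i).quasiMeasurePreserving.ae
    (ae_iff.2 hA)).exists

lemma nuCount_div_mem_Icc (A : Set X) (N : ℕ) (x : X) :
    (nuCount f A N x : ℝ) / N ∈ Set.Icc 0 1 := by
  refine ⟨by positivity, div_le_one_of_le₀ ?_ N.cast_nonneg⟩
  exact_mod_cast (Finset.card_filter_le _ _).trans_eq (Finset.card_range N)

lemma Rrec_eq_one_of_forall_seqEvol_mem {A : Set X} {x₀ : X} (hx₀ : ∀ i, seqEvol f i x₀ ∈ A) :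
    Rrec f A = 1 := by
  have : Nonempty X := ⟨x₀⟩
  have hfull : ∀ N ≥ 1, (⨆ x, (nuCount f A N x : ℝ) / N) = 1 := by
    intro N hN
    have hx₀N : nuCount f A N x₀ = N := by
      rw [nuCount, Finset.filter_true_of_mem fun i _ => hx₀ i, Finset.card_range]
    refine le_antisymm (ciSup_le fun x => (nuCount_div_mem_Icc f A N x).2) ?_
    refine le_ciSup_of_le ⟨1, ?_⟩ x₀ ?_
    · rintro _ ⟨x, rfl⟩
      exact (nuCount_div_mem_Icc f A N x).2
    · rw [hx₀N, div_self (by positivity)]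
  rw [Rrec, limsup_congr (eventually_atTop.2 ⟨1, hfull⟩), limsup_const]

noncomputable def seqAverage (F : X → ℝ) (N : ℕ) (x : X) : ℝ :=
  (1 / (N : ℝ)) * ∑ i ∈ Finset.range N, F (seqEvol f i x)

lemma seqAverage_le (F : X → ℝ) {M : ℝ} (hFM : ∀ y, F y ≤ M) (t : ℝ) {N : ℕ} (hN : 0 < N)
    (x : X) :
    seqAverage f F N x ≤ t + (M - t) * ((nuCount f {y | t ≤ F y} N x : ℝ) / N) := by
  have hsum := Finset.sum_le_card_mul_add_card_filter_mul (Finset.range N)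
    (fun i => seqEvol f i x ∈ {y | t ≤ F y}) (fun i => F (seqEvol f i x))
    (fun i _ _ => hFM _) (fun i _ hi => (not_le.1 hi).le)
  rw [Finset.card_range] at hsum
  rwa [seqAverage, nuCount, one_div, inv_mul_le_iff₀ (by positivity), mul_add, mul_left_comm,
    mul_div_cancel₀ _ (by positivity)]

lemma limsup_iSup_seqAverage_le [CompactSpace X] [Nonempty X] (F : C(X, ℝ)) {t : ℝ}
    (ht : t ≤ ⨆ y, F y) :
    limsup (fun N => ⨆ x, seqAverage f F N x) atTop ≤
      t + ((⨆ y, F y) - t) * Rrec f {x | t ≤ F x} := by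
  set M := ⨆ y, F y
  set u := fun N : ℕ => ⨆ x, (nuCount f {x | t ≤ F x} N x : ℝ) / N
  set g := fun s : ℝ => t + (M - t) * s
  have hFM : ∀ y, F y ≤ M := le_ciSup (isCompact_range F.continuous).bddAbove
  have hMt : 0 ≤ M - t := sub_nonneg.2 ht
  have hg : Monotone g := fun a b hab => by dsimp only [g]; gcongr
  have hu : ∀ N, u N ∈ Set.Icc 0 1 := fun N => Real.iSup_mem_Icc (nuCount_div_mem_Icc f _ N)
  have hv : ∀ N, (⨆ x, seqAverage f F N x) ∈ Set.Icc (-‖F‖) ‖F‖ := fun N =>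
    Real.iSup_mem_Icc fun x => abs_le.1 <|
      abs_one_div_mul_sum_range_le (norm_nonneg F) (fun i => F.norm_coe_le_norm _) N
  have hle : ∀ᶠ N in atTop, (⨆ x, seqAverage f F N x) ≤ g (u N) := by
    filter_upwards [eventually_gt_atTop 0] with N hN
    refine ciSup_le fun x => (seqAverage_le f F hFM t hN x).trans (hg ?_)
    exact le_ciSup (f := fun y => (nuCount f {y | t ≤ F y} N y : ℝ) / N)
      ⟨1, by rintro _ ⟨y, rfl⟩; exact (nuCount_div_mem_Icc f _ N y).2⟩ x
  calc _ ≤ limsup (g ∘ u) atTop := limsup_le_limsup hle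
        (isCoboundedUnder_le_of_le atTop fun N => (hv N).1)
        (isBoundedUnder_of ⟨g 1, fun N => hg (hu N).2⟩)
    _ = g (Rrec f {x | t ≤ F x}) := (hg.map_limsup_of_continuousAt u (by fun_prop)
        (isBoundedUnder_of ⟨1, fun N => (hu N).2⟩)
        (isCoboundedUnder_le_of_le atTop fun N => (hu N).1)).symm

end SequentialSystem

theorem stmt_17_general {X : Type*} [TopologicalSpace X] [CompactSpace X] [Nonempty X]
    [MeasurableSpace X] [BorelSpace X] (μ : Measure X) [IsProbabilityMeasure μ]
    (f : ℕ → X ≃ₜ X) (hf : ∀ i : ℕ, MeasurePreserving (f i) μ μ)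
    (F : C(X, ℝ)) (hFmean : ∫ x, F x ∂μ = 0)
    (α : ℝ) (hα : α ∈ Set.Ioc (0 : ℝ) 1)
    (hquasi : α * (⨆ x : X, F x) ≤
      limsup (fun N : ℕ => ⨆ x : X,
        (1 / (N : ℝ)) * ∑ i ∈ Finset.range N, F (seqEvol f i x)) atTop)
    (c : ℝ) (hc : c ∈ Set.Ioo (0 : ℝ) α) :
    (α - c) / (1 - c) ≤ Rrec f {x : X | c * (⨆ y : X, F y) ≤ F x} := by
  obtain ⟨-, hα1⟩ := hα
  obtain ⟨hc0, hcα⟩ := hc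
  set M := ⨆ y, F y
  have hFM : ∀ x, F x ≤ M := le_ciSup (isCompact_range F.continuous).bddAbove
  have hFint : Integrable F μ := F.continuous.integrable_of_hasCompactSupport (.of_compactSpace _)
  have hM0 : 0 ≤ M := by simpa [hFmean] using integral_mono hFint (integrable_const M) hFM
  rcases hM0.eq_or_lt with hM | hM
  · have hFae : -F =ᵐ[μ] 0 :=
      (integral_eq_zero_iff_of_nonneg (fun x => neg_nonneg.2 (hM ▸ hFM x)) hFint.neg).1
        (by simp [integral_neg, hFmean])
    have hAc : {x | c * M ≤ F x}ᶜ ⊆ {x | (-F) x ≠ 0} := fun x (hx : ¬ c * M ≤ F x) => by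
      rw [← hM, mul_zero, not_le] at hx
      simpa using hx.ne
    obtain ⟨x₀, hx₀⟩ := exists_forall_seqEvol_mem f μ hf (measure_mono_null hAc (ae_iff.1 hFae))
    rw [Rrec_eq_one_of_forall_seqEvol_mem f hx₀, div_le_one (by linarith)]
    linarith
  · have hbound := hquasi.trans (limsup_iSup_seqAverage_le f F (t := c * M) (by nlinarith))
    rw [div_le_iff₀ (by linarith)]
    exact le_of_mul_le_mul_right (by linarith) hM

/-- if `F` is an `α`-quasi-integral of the sequential system `f_*`, then for
every `c ∈ (0, α)` the super-level set `A_c = {F ≥ c·max F}` satisfies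
`R(f_*, A_c) ≥ (α − c)/(1 − c)`. -/
theorem stmt_17 {X : Type*} [TopologicalSpace X] [CompactSpace X] [Nonempty X]
    [MeasurableSpace X] [BorelSpace X] (μ : Measure X) [IsProbabilityMeasure μ]
    (f : ℕ → X ≃ₜ X) (hf : ∀ i : ℕ, MeasurePreserving (f i) μ μ)
    (F : C(X, ℝ)) (hFmean : ∫ x, F x ∂μ = 0) (hF0 : ∃ x : X, F x ≠ 0)
    (α : ℝ) (hα : α ∈ Set.Ioc (0 : ℝ) 1)
    (hquasi : α * (⨆ x : X, F x) ≤
      limsup (fun N : ℕ => ⨆ x : X,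
        (1 / (N : ℝ)) * ∑ i ∈ Finset.range N, F (seqEvol f i x)) atTop)
    (c : ℝ) (hc : c ∈ Set.Ioo (0 : ℝ) α) :
    (α - c) / (1 - c) ≤ Rrec f {x : X | c * (⨆ y : X, F y) ≤ F x} :=
  stmt_17_general μ f hf F hFmean α hα hquasi c hc
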